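/- For a monoid S the following are equivalent: (i) every InD-injective right S-act is injective; (ii) every InD-injective right S-act is quasi injective; (iii) S is left reversible. -/

import Mathlib

universe u

/-- A right `S`-act structure on a nonempty type `A`: a right action of the monoid `S`. -/
class RightAct (S : Type u) [Monoid S] (A : Type u) : Type u where
  act : A → S → A
  act_one : ∀ a : A, act a 1 = a
  act_mul : ∀ (a : A) (s t : S), act (act a s) t = act a (s * t)
  nonempty : Nonempty A

infixl:70 " ⊛ " => RightAct.act

/-- `S` is left reversible: every two right ideals (equiv. principal ones) intersect. -/
def LeftReversible (S : Type u) [Monoid S] : Prop :=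
  ∀ a b : S, ∃ u v : S, a * u = b * v

/-- A left zero element of the monoid `S`. -/
def IsLeftZero (S : Type u) [Monoid S] (z : S) : Prop :=
  ∀ s : S, z * s = z

/-- `f : A → B` is a homomorphism of right `S`-acts. -/
def IsActHom (S : Type u) [Monoid S] {A B : Type u} [RightAct S A] [RightAct S B]
    (f : A → B) : Prop :=
  ∀ (a : A) (s : S), f (a ⊛ s) = f a ⊛ s

/-- The restriction of `f : A → B` to the subset `C` is a homomorphism of right `S`-acts. -/
def IsActHomOn (S : Type u) [Monoid S] {A B : Type u} [RightAct S A] [RightAct S B]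
    (f : A → B) (C : Set A) : Prop :=
  ∀ a ∈ C, ∀ s : S, f (a ⊛ s) = f a ⊛ s

/-- A subact: a nonempty subset closed under the action. -/
def IsSubact (S : Type u) [Monoid S] {A : Type u} [RightAct S A] (C : Set A) : Prop :=
  C.Nonempty ∧ ∀ a ∈ C, ∀ s : S, a ⊛ s ∈ C

/-- A zero element of an act: fixed by the action of every `s ∈ S`. -/
def IsZeroElem (S : Type u) [Monoid S] {A : Type u} [RightAct S A] (θ : A) : Prop :=
  ∀ s : S, θ ⊛ s = θ

/-- A subset `D` (viewed as an act) is decomposable: it is the disjoint union of two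
nonempty subacts. -/
def DecomposableSet (S : Type u) [Monoid S] {A : Type u} [RightAct S A] (D : Set A) : Prop :=
  ∃ B C : Set A, IsSubact S B ∧ IsSubact S C ∧ B ∪ C = D ∧ B ∩ C = ∅

/-- A subset (viewed as an act) is indecomposable. -/
def IndecomposableSet (S : Type u) [Monoid S] {A : Type u} [RightAct S A] (D : Set A) : Prop :=
  ¬ DecomposableSet S D

/-- The act `A` is decomposable. -/
def Decomposable (S : Type u) [Monoid S] (A : Type u) [RightAct S A] : Prop :=
  DecomposableSet S (Set.univ : Set A)

/-- The act `A` is indecomposable. -/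
def Indecomposable (S : Type u) [Monoid S] (A : Type u) [RightAct S A] : Prop :=
  ¬ Decomposable S A

/-- A cyclic act: generated by a single element. -/
def CyclicAct (S : Type u) [Monoid S] (A : Type u) [RightAct S A] : Prop :=
  ∃ a : A, ∀ x : A, ∃ s : S, x = a ⊛ s

/-- `A` is a retract of `B`. -/
def IsRetractOf (S : Type u) [Monoid S] (A B : Type u) [RightAct S A] [RightAct S B] : Prop :=
  ∃ (i : A → B) (p : B → A), IsActHom S i ∧ IsActHom S p ∧ ∀ a : A, p (i a) = a

/-- `Q` is an injective act: every homomorphism from a subact `C` of any act `B` into `Q`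
extends to `B`. -/
def ActInjective (S : Type u) [Monoid S] (Q : Type u) [RightAct S Q] : Prop :=
  ∀ (B : Type u) [RightAct S B], ∀ C : Set B, IsSubact S C →
    ∀ f : B → Q, IsActHomOn S f C →
      ∃ g : B → Q, IsActHom S g ∧ Set.EqOn g f C

/-- `Q` is InC-injective: injective relative to all embeddings into indecomposable acts. -/
def InCInjective (S : Type u) [Monoid S] (Q : Type u) [RightAct S Q] : Prop :=
  ∀ (B : Type u) [RightAct S B], Indecomposable S B → ∀ C : Set B, IsSubact S C →
    ∀ f : B → Q, IsActHomOn S f C →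
      ∃ g : B → Q, IsActHom S g ∧ Set.EqOn g f C

/-- `Q` is InD-injective: injective relative to all embeddings of indecomposable acts. -/
def InDInjective (S : Type u) [Monoid S] (Q : Type u) [RightAct S Q] : Prop :=
  ∀ (B : Type u) [RightAct S B], ∀ C : Set B, IsSubact S C → IndecomposableSet S C →
    ∀ f : B → Q, IsActHomOn S f C →
      ∃ g : B → Q, IsActHom S g ∧ Set.EqOn g f C

/-- `Q` is PInD-injective: every monomorphism from an indecomposable subact extends. -/
def PInDInjective (S : Type u) [Monoid S] (Q : Type u) [RightAct S Q] : Prop :=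
  ∀ (B : Type u) [RightAct S B], ∀ C : Set B, IsSubact S C → IndecomposableSet S C →
    ∀ f : B → Q, IsActHomOn S f C → Set.InjOn f C →
      ∃ g : B → Q, IsActHom S g ∧ Set.EqOn g f C

/-- `A` is quasi injective: homomorphisms from subacts of `A` to `A` extend to `A`. -/
def QuasiInjective (S : Type u) [Monoid S] (A : Type u) [RightAct S A] : Prop :=
  ∀ C : Set A, IsSubact S C → ∀ f : A → A, IsActHomOn S f C →
    ∃ g : A → A, IsActHom S g ∧ Set.EqOn g f C

/-- `A` is pseudo injective: monomorphisms from subacts of any act into `A` extend. -/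
def PseudoInjective (S : Type u) [Monoid S] (A : Type u) [RightAct S A] : Prop :=
  ∀ (C : Type u) [RightAct S C], ∀ B : Set C, IsSubact S B →
    ∀ f : C → A, IsActHomOn S f B → Set.InjOn f B →
      ∃ g : C → A, IsActHom S g ∧ Set.EqOn g f B

/-- A subact `Q` of `A` (viewed as an act in its own right) is injective. -/
def ActInjectiveSet (S : Type u) [Monoid S] {A : Type u} [RightAct S A] (Q : Set A) : Prop :=
  ∀ (B : Type u) [RightAct S B], ∀ C : Set B, IsSubact S C →
    ∀ f : B → A, IsActHomOn S f C → (∀ c ∈ C, f c ∈ Q) →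
      ∃ g : B → A, IsActHom S g ∧ (∀ b : B, g b ∈ Q) ∧ Set.EqOn g f C

/-- A subact `Q` of `A` (viewed as an act in its own right) is InD-injective. -/
def InDInjectiveSet (S : Type u) [Monoid S] {A : Type u} [RightAct S A] (Q : Set A) : Prop :=
  ∀ (B : Type u) [RightAct S B], ∀ C : Set B, IsSubact S C → IndecomposableSet S C →
    ∀ f : B → A, IsActHomOn S f C → (∀ c ∈ C, f c ∈ Q) →
      ∃ g : B → A, IsActHom S g ∧ (∀ b : B, g b ∈ Q) ∧ Set.EqOn g f C

/-- A subact `Q` of `A` (viewed as an act in its own right) is PInD-injective. -/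
def PInDInjectiveSet (S : Type u) [Monoid S] {A : Type u} [RightAct S A] (Q : Set A) : Prop :=
  ∀ (B : Type u) [RightAct S B], ∀ C : Set B, IsSubact S C → IndecomposableSet S C →
    ∀ f : B → A, IsActHomOn S f C → Set.InjOn f C → (∀ c ∈ C, f c ∈ Q) →
      ∃ g : B → A, IsActHom S g ∧ (∀ b : B, g b ∈ Q) ∧ Set.EqOn g f C

/-- The monoid `S` as a right act over itself, by multiplication. -/
instance selfAct (S : Type u) [Monoid S] : RightAct S S where
  act a s := a * s
  act_one := mul_one
  act_mul a s t := mul_assoc a s t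
  nonempty := ⟨1⟩

/-- `Q` is weakly injective: homomorphisms from right ideals of `S` into `Q` extend to `S`. -/
def WeaklyInjective (S : Type u) [Monoid S] (Q : Type u) [RightAct S Q] : Prop :=
  ∀ I : Set S, IsSubact S I → ∀ f : S → Q, IsActHomOn S f I →
    ∃ g : S → Q, IsActHom S g ∧ Set.EqOn g f I

/-- The relation whose equivalence closure has the indecomposable components as classes. -/
def ActRel (S : Type u) [Monoid S] {A : Type u} [RightAct S A] (a b : A) : Prop :=
  ∃ s : S, b = a ⊛ s

/-- The indecomposable component of the element `a` of an act. -/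
def ActComponent (S : Type u) [Monoid S] {A : Type u} [RightAct S A] (a : A) : Set A :=
  {b | Relation.EqvGen (ActRel S) a b}


/-!
If `S` is left reversible, two elements of an act lie in the same component iff they have a
common multiple, so a subact meets each component in an indecomposable subact; extending a
homomorphism separately on each component and gluing gives (iii) ⇒ (i). If `aS ∩ bS = ∅`,
the coproduct `F ⊔ F` of two copies of the injective cofree act `F = S^S` is InD-injective,
since an indecomposable subact maps into a single summand. It is not quasi injective: with
`p = id ∈ F`, the endomorphism of `paS ∪ pbS` inside the first summand that moves `pbS` to
the second summand cannot extend, since an extension would send `p` into both summands.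
-/

section General

variable {S : Type u} [Monoid S]

theorem ActInjective.quasiInjective {A : Type u} [RightAct S A] (hA : ActInjective S A) :
    QuasiInjective S A :=
  fun C hC f hf => hA A C hC f hf

theorem ActInjective.inDInjective {A : Type u} [RightAct S A] (hA : ActInjective S A) :
    InDInjective S A :=
  fun B _ C hC _ f hf => hA B C hC f hf

theorem RightAct.act_mem_range_act {A : Type u} [RightAct S A] {x y : A}
    (hy : y ∈ Set.range fun t : S => x ⊛ t) (s : S) : y ⊛ s ∈ Set.range fun t : S => x ⊛ t := by
  obtain ⟨t, rfl⟩ := hy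
  exact ⟨t * s, (RightAct.act_mul x t s).symm⟩

theorem RightAct.mem_range_act_self {A : Type u} [RightAct S A] (x : A) :
    x ∈ Set.range fun t : S => x ⊛ t :=
  ⟨1, RightAct.act_one x⟩

theorem IndecomposableSet.eq_of_act_invariant {A : Type u} [RightAct S A] {C : Set A}
    (hC : IsSubact S C) (hCi : IndecomposableSet S C) {β : Type*} (φ : A → β)
    (hφ : ∀ c ∈ C, ∀ s : S, φ (c ⊛ s) = φ c) {c d : A} (hc : c ∈ C) (hd : d ∈ C) :
    φ c = φ d := by
  by_contra hne
  have closed : ∀ P : β → Prop, ∀ x ∈ {x ∈ C | P (φ x)}, ∀ s : S, x ⊛ s ∈ {x ∈ C | P (φ x)} :=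
    fun P x hx s => ⟨hC.2 x hx.1 s, show P (φ (x ⊛ s)) from (hφ x hx.1 s) ▸ hx.2⟩
  refine hCi ⟨{x ∈ C | φ x = φ c}, {x ∈ C | φ x ≠ φ c}, ⟨⟨c, hc, rfl⟩, closed (· = φ c)⟩,
    ⟨⟨d, hd, Ne.symm hne⟩, closed (· ≠ φ c)⟩, ?_, ?_⟩
  · ext x
    simp only [Set.mem_union, Set.mem_ofPred_eq]
    tauto
  · ext x
    simp only [Set.mem_inter_iff, Set.mem_ofPred_eq, Set.mem_empty_iff_false, iff_false]
    tauto

theorem indecomposableSet_of_forall_exists_act_eq {A : Type u} [RightAct S A] {D : Set A}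
    (h : ∀ x ∈ D, ∀ y ∈ D, ∃ u v : S, x ⊛ u = y ⊛ v) : IndecomposableSet S D := by
  rintro ⟨B₁, B₂, ⟨⟨x, hx⟩, hB₁⟩, ⟨⟨y, hy⟩, hB₂⟩, rfl, hdisj⟩
  obtain ⟨u, v, huv⟩ := h x (Or.inl hx) y (Or.inr hy)
  exact Set.eq_empty_iff_forall_notMem.mp hdisj _ ⟨hB₁ x hx u, huv ▸ hB₂ y hy v⟩

theorem actComponent_act {A : Type u} [RightAct S A] (x : A) (s : S) :
    ActComponent S (x ⊛ s) = ActComponent S x := by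
  have hx : Relation.EqvGen (ActRel S) x (x ⊛ s) := .rel _ _ ⟨s, rfl⟩
  ext y
  exact ⟨hx.trans _ _ _, hx.symm.trans _ _ _⟩

theorem LeftReversible.exists_act_eq_of_eqvGen (hS : LeftReversible S) {A : Type u}
    [RightAct S A] {x y : A} (h : Relation.EqvGen (ActRel S) x y) :
    ∃ u v : S, x ⊛ u = y ⊛ v := by
  induction h with
  | rel x y h => obtain ⟨s, rfl⟩ := h; exact ⟨s, 1, (RightAct.act_one _).symm⟩
  | refl x => exact ⟨1, 1, rfl⟩
  | symm x y _ ih => obtain ⟨u, v, huv⟩ := ih; exact ⟨v, u, huv.symm⟩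
  | trans x y z _ _ ih₁ ih₂ =>
      obtain ⟨u, v, h₁⟩ := ih₁
      obtain ⟨w, t, h₂⟩ := ih₂
      obtain ⟨p, q, hpq⟩ := hS v w
      refine ⟨u * p, t * q, ?_⟩
      rw [← RightAct.act_mul, h₁, RightAct.act_mul, hpq, ← RightAct.act_mul, h₂,
        RightAct.act_mul]

theorem exists_isActHom_eqOn_of_forall_fiber {B Q : Type u} [RightAct S B] [RightAct S Q]
    {ι : Type*} (κ : B → ι) (hκ : ∀ (b : B) (s : S), κ (b ⊛ s) = κ b) {C : Set B}
    (hC : C.Nonempty) {f : B → Q}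
    (h : ∀ c ∈ C, ∃ g : B → Q, IsActHom S g ∧ Set.EqOn g f {x ∈ C | κ x = κ c}) :
    ∃ g : B → Q, IsActHom S g ∧ Set.EqOn g f C := by
  have hfiber : ∀ i, ∃ g : B → Q, IsActHom S g ∧ Set.EqOn g f {x ∈ C | κ x = i} := by
    intro i
    by_cases hi : ∃ c ∈ C, κ c = i
    · obtain ⟨c, hc, rfl⟩ := hi
      exact h c hc
    · obtain ⟨c, hc⟩ := hC
      obtain ⟨g, hg, -⟩ := h c hc
      exact ⟨g, hg, fun x hx => (hi ⟨x, hx⟩).elim⟩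
  choose G hG hGf using hfiber
  refine ⟨fun b => G (κ b) b, fun b s => ?_, fun c hc => hGf (κ c) ⟨hc, rfl⟩⟩
  simp only [hκ]
  exact hG (κ b) b s

theorem LeftReversible.actInjective_of_inDInjective (hS : LeftReversible S) {Q : Type u}
    [RightAct S Q] (hQ : InDInjective S Q) : ActInjective S Q := by
  intro B _ C hC f hf
  refine exists_isActHom_eqOn_of_forall_fiber (ActComponent S) actComponent_act hC.1
    fun c hc => ?_
  set E : Set B := {x ∈ C | ActComponent S x = ActComponent S c}
  have hE : IsSubact S E :=
    ⟨⟨c, hc, rfl⟩, fun x hx s => ⟨hC.2 x hx.1 s, (actComponent_act x s).trans hx.2⟩⟩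
  have hEi : IndecomposableSet S E := by
    refine indecomposableSet_of_forall_exists_act_eq fun x hx y hy => ?_
    have hxy : y ∈ ActComponent S x := by
      rw [hx.2, ← hy.2]
      exact .refl y
    exact hS.exists_act_eq_of_eqvGen hxy
  exact hQ B E hE hEi f fun x hx s => hf x hx.1 s

theorem InDInjective.exists_eqOn_of_range {Q Q' B : Type u} [RightAct S Q] [RightAct S Q']
    [RightAct S B] (hQ : InDInjective S Q) {ι : Q → Q'} (hι : IsActHom S ι)
    (hι_inj : Function.Injective ι) {C : Set B} (hC : IsSubact S C)
    (hCi : IndecomposableSet S C) {f : B → Q'} (hf : IsActHomOn S f C)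
    (hfC : ∀ c ∈ C, f c ∈ Set.range ι) : ∃ g : B → Q', IsActHom S g ∧ Set.EqOn g f C := by
  have : Nonempty Q := RightAct.nonempty S
  have hinv : ∀ c ∈ C, ι (Function.invFun ι (f c)) = f c := fun c hc =>
    Function.invFun_eq (hfC c hc)
  obtain ⟨g, hg, hgf⟩ := hQ B C hC hCi (Function.invFun ι ∘ f) fun c hc s =>
    hι_inj (by rw [Function.comp_apply, hinv _ (hC.2 c hc s), Function.comp_apply, hι,
      hinv c hc, hf c hc s])
  exact ⟨ι ∘ g, fun b s => by rw [Function.comp_apply, hg, hι, Function.comp_apply],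
    fun c hc => by simp only [Function.comp_apply, hgf hc, hinv c hc]⟩

end General

instance sumAct (S A B : Type u) [Monoid S] [RightAct S A] [RightAct S B] :
    RightAct S (A ⊕ B) where
  act x s := Sum.map (· ⊛ s) (· ⊛ s) x
  act_one x := by cases x <;> simp [RightAct.act_one]
  act_mul x s t := by cases x <;> simp [RightAct.act_mul]
  nonempty := ⟨Sum.inl (Classical.choice (RightAct.nonempty S))⟩

instance cofreeAct (S : Type u) [Monoid S] : RightAct S (S → S) where
  act q s t := q (s * t)
  act_one q := by simp
  act_mul q s t := by simp [mul_assoc]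
  nonempty := ⟨id⟩

section Sum

variable {S A B : Type u} [Monoid S] [RightAct S A] [RightAct S B]

@[simp]
theorem Sum.inl_act (x : A) (s : S) : (Sum.inl x : A ⊕ B) ⊛ s = Sum.inl (x ⊛ s) := rfl

@[simp]
theorem Sum.inr_act (x : B) (s : S) : (Sum.inr x : A ⊕ B) ⊛ s = Sum.inr (x ⊛ s) := rfl

@[simp]
theorem Sum.isLeft_act (x : A ⊕ B) (s : S) : (x ⊛ s).isLeft = x.isLeft :=
  Sum.isLeft_map _ _ x

theorem InDInjective.sum (hA : InDInjective S A) (hB : InDInjective S B) :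
    InDInjective S (A ⊕ B) := by
  intro X _ C hC hCi f hf
  obtain ⟨c₀, hc₀⟩ := hC.1
  have hside : ∀ c ∈ C, (f c).isLeft = (f c₀).isLeft := fun c hc =>
    hCi.eq_of_act_invariant hC (fun x => (f x).isLeft)
      (fun x hx s => by simp only [hf x hx s, Sum.isLeft_act]) hc hc₀
  cases hc₀_side : (f c₀).isLeft
  · refine hB.exists_eqOn_of_range (fun _ _ => rfl) Sum.inr_injective hC hCi hf fun c hc => ?_
    have hc_side := (hside c hc).trans hc₀_side
    cases hfc : f c with
    | inl y => simp [hfc] at hc_side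
    | inr y => exact ⟨y, rfl⟩
  · refine hA.exists_eqOn_of_range (fun _ _ => rfl) Sum.inl_injective hC hCi hf fun c hc => ?_
    have hc_side := (hside c hc).trans hc₀_side
    cases hfc : f c with
    | inl y => exact ⟨y, rfl⟩
    | inr y => simp [hfc] at hc_side

end Sum

theorem actInjective_cofree (S : Type u) [Monoid S] : ActInjective S (S → S) := by
  classical
  intro B _ C hC f hf
  refine ⟨fun b t => if b ⊛ t ∈ C then f (b ⊛ t) 1 else 1, fun b s => ?_, fun c hc => ?_⟩
  · funext t
    simp only [RightAct.act_mul]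
    rfl
  · funext t
    simp only [if_pos (hC.2 c hc t), hf c hc t]
    exact congrArg (f c) (mul_one t)

theorem not_quasiInjective_sum_self {S F : Type u} [Monoid S] [RightAct S F] (p : F) (a b : S)
    (hab : ∀ u v : S, (p ⊛ a : F) ⊛ u ≠ (p ⊛ b : F) ⊛ v) : ¬ QuasiInjective S (F ⊕ F) := by
  classical
  intro hQ
  set X₁ : Set F := Set.range fun t : S => (p ⊛ a : F) ⊛ t
  set X₂ : Set F := Set.range fun t : S => (p ⊛ b : F) ⊛ t
  have hdisj : ∀ x ∈ X₁, x ∉ X₂ := by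
    rintro _ ⟨u, rfl⟩ ⟨v, hv⟩
    exact hab u v hv.symm
  have hX₂ : ∀ x ∈ X₁ ∪ X₂, ∀ s : S, x ⊛ s ∈ X₂ ↔ x ∈ X₂ := by
    rintro x (hx | hx) s
    · exact iff_of_false (hdisj _ (RightAct.act_mem_range_act hx s)) (hdisj x hx)
    · exact iff_of_true (RightAct.act_mem_range_act hx s) hx
  set C : Set (F ⊕ F) := Sum.inl '' (X₁ ∪ X₂)
  have hC : IsSubact S C := by
    refine ⟨⟨_, p ⊛ a, Or.inl (RightAct.mem_range_act_self _), rfl⟩, ?_⟩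
    rintro _ ⟨x, hx | hx, rfl⟩ s
    · exact ⟨x ⊛ s, Or.inl (RightAct.act_mem_range_act hx s), rfl⟩
    · exact ⟨x ⊛ s, Or.inr (RightAct.act_mem_range_act hx s), rfl⟩
  set f : F ⊕ F → F ⊕ F := Sum.elim (fun x => if x ∈ X₂ then .inr x else .inl x) .inr
  have hf : IsActHomOn S f C := by
    rintro _ ⟨x, hx, rfl⟩ s
    by_cases hx₂ : x ∈ X₂ <;> simp [f, hX₂ x hx s, hx₂]
  obtain ⟨g, hg, hgf⟩ := hQ C hC f hf
  have hpa : g (.inl p) ⊛ a = .inl (p ⊛ a) := by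
    rw [← hg, Sum.inl_act, hgf ⟨_, Or.inl (RightAct.mem_range_act_self _), rfl⟩]
    exact if_neg (hdisj _ (RightAct.mem_range_act_self _))
  have hpb : g (.inl p) ⊛ b = .inr (p ⊛ b) := by
    rw [← hg, Sum.inl_act, hgf ⟨_, Or.inr (RightAct.mem_range_act_self _), rfl⟩]
    exact if_pos (RightAct.mem_range_act_self _)
  have h₁ := congrArg Sum.isLeft hpa
  have h₂ := congrArg Sum.isLeft hpb
  simp only [Sum.isLeft_act, Sum.isLeft_inl, Sum.isLeft_inr] at h₁ h₂
  rw [h₁] at h₂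
  cases h₂

theorem leftReversible_of_inDInjective_quasiInjective (S : Type u) [Monoid S]
    (h : ∀ (Q : Type u) [RightAct S Q], InDInjective S Q → QuasiInjective S Q) :
    LeftReversible S := by
  by_contra hS
  simp only [LeftReversible, not_forall, not_exists] at hS
  obtain ⟨a, b, hab⟩ := hS
  have hF := (actInjective_cofree S).inDInjective
  refine not_quasiInjective_sum_self (id : S → S) a b (fun u v huv => hab u v ?_)
    (h _ (hF.sum hF))
  simpa using (show a * (u * 1) = b * (v * 1) from congrFun huv 1)

theorem inDInjective_injective_tfae (S : Type u) [Monoid S] :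
    List.TFAE [
      ∀ (Q : Type u) [RightAct S Q], InDInjective S Q → ActInjective S Q,
      ∀ (Q : Type u) [RightAct S Q], InDInjective S Q → QuasiInjective S Q,
      LeftReversible S ] := by
  tfae_have 1 → 2 := fun h Q _ hQ => (h Q hQ).quasiInjective
  tfae_have 2 → 3 := leftReversible_of_inDInjective_quasiInjective S
  tfae_have 3 → 1 := fun hS Q _ hQ => hS.actInjective_of_inDInjective hQ
  tfae_finish
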